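/- Fix a real E-by-V matrix d, a diagonal V-by-V matrix ★₀ with positive diagonal, a diagonal E-by-E matrix ★₁, an edge e ∈ E, and n = |V|. For t ∈ ℝ let ★₁(t) = ★₁ + t Eₑₑ. Suppose xⁱ(t) ∈ ℝ^V and λⁱ(t) ∈ ℝ (i = 1, …, n) are differentiable at 0, satisfy dᵀ★₁(t)d xⁱ(t) = λⁱ(t) ★₀ xⁱ(t) and (xⁱ(t))ᵀ★₀xⁱ(t) = 1 near 0, satisfy (xⁱ(0))ᵀ★₀xʲ(0) = δᵢⱼ, and the eigenvalues λ¹(0), …, λⁿ(0) are pairwise distinct. Let ℒ : ℝⁿ × (ℝ^V)ⁿ → ℝ be differentiable. Then d/dt ℒ(λ¹(t), …, λⁿ(t), x¹(t), …, xⁿ(t)) at t = 0 equals Σᵢ (∂ℒ/∂λⁱ) (yⁱₑ)² + Σ_{i,v,j} (∂ℒ/∂xⁱᵥ) Mᵢⱼ xʲᵥ yʲₑ yⁱₑ, where all quantities on the right are evaluated at t = 0, yⁱ = d xⁱ(0), Mᵢⱼ = (λⁱ − λʲ)⁻¹ for i ≠ j, and Mᵢᵢ = 0. -/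

import Mathlib

/-!
Differentiating `(A₀ + t A₁) xⁱ(t) = λⁱ(t) B xⁱ(t)` at `0`, with `A₀ = dᵀ★₁d`, `A₁ = dᵀEₑₑd`,
`B = ★₀`, and pairing with the eigenvector `xʲ(0)` (both `A₀` and `B` are symmetric) gives
`(λʲ - λⁱ) ⟨xʲ, B ẋⁱ⟩ + yʲₑ yⁱₑ = λ̇ⁱ ⟨xʲ, B xⁱ⟩`. For `j = i` this is `λ̇ⁱ = (yⁱₑ)²`; for `j ≠ i`
it gives the `xʲ`-coordinate of `ẋⁱ` in the `B`-orthonormal basis `(xʲ(0))`, while the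
`xⁱ`-coordinate vanishes by differentiating the normalization. The chain rule for `ℒ` does the rest.
-/

open Matrix Filter Topology

section Calculus

variable {𝕜 : Type*} [NontriviallyNormedField 𝕜] {n m : Type*} [Fintype n]
  {x y : 𝕜 → n → 𝕜} {x' y' : n → 𝕜} {t : 𝕜}

theorem HasDerivAt.dotProduct (hx : HasDerivAt x x' t) (hy : HasDerivAt y y' t) :
    HasDerivAt (fun s => x s ⬝ᵥ y s) (x' ⬝ᵥ y t + x t ⬝ᵥ y') t := by
  have h : HasDerivAt (fun s => ∑ i, x s i * y s i) (∑ i, (x' i * y t i + x t i * y' i)) t :=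
    HasDerivAt.fun_sum fun i _ => (hasDerivAt_pi.1 hx i).fun_mul (hasDerivAt_pi.1 hy i)
  exact h.congr_deriv Finset.sum_add_distrib

theorem HasDerivAt.mulVec (M : Matrix m n 𝕜) (hx : HasDerivAt x x' t) :
    HasDerivAt (fun s => M *ᵥ x s) (M *ᵥ x') t :=
  hasDerivAt_pi.2 fun i => by
    have h : HasDerivAt (fun s => M i ⬝ᵥ x s) (0 ⬝ᵥ x t + M i ⬝ᵥ x') t :=
      (hasDerivAt_const t (M i)).dotProduct hx
    rwa [zero_dotProduct, zero_add] at h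

end Calculus

section Expansion

variable {R n : Type*} [CommRing R] [Fintype n] [DecidableEq n]

theorem eq_sum_dotProduct_mulVec_smul_of_orthonormal {B : Matrix n n R} {x : n → n → R}
    (horth : ∀ i j, x i ⬝ᵥ (B *ᵥ x j) = if i = j then 1 else 0) (w : n → R) :
    w = ∑ j, (x j ⬝ᵥ (B *ᵥ w)) • x j := by
  have hX : of x * (B * (of x)ᵀ) = 1 := by
    ext i j
    rw [one_apply, ← horth, mul_apply]
    simp [dotProduct, mulVec, mul_apply]
  have hX' : (of x)ᵀ * of x * B = 1 := by
    have h := mul_eq_one_comm.1 hX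
    rw [mul_assoc] at h
    exact mul_eq_one_comm.1 h
  calc w = (of x)ᵀ *ᵥ (of x *ᵥ (B *ᵥ w)) := by rw [mulVec_mulVec, mulVec_mulVec, hX', one_mulVec]
    _ = _ := by rw [mulVec_transpose, vecMul_eq_sum]; rfl

end Expansion

section LinearMap

variable {R M ι κ μ : Type*} [Semiring R] [AddCommMonoid M] [Module R M]
  [Fintype ι] [Fintype κ] [Fintype μ] [DecidableEq ι] [DecidableEq κ] [DecidableEq μ]

theorem LinearMap.prod_pi_apply_eq_sum (f : (ι → R) × (κ → μ → R) →ₗ[R] M)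
    (a : ι → R) (b : κ → μ → R) :
    f (a, b) = ∑ i, a i • f (Pi.single i 1, 0)
      + ∑ k, ∑ v, b k v • f (0, Pi.single k (Pi.single v 1)) := by
  have hab : (a, b) = ∑ i, a i • ((Pi.single i 1, 0) : (ι → R) × (κ → μ → R))
      + ∑ k, ∑ v, b k v • ((0, Pi.single k (Pi.single v 1)) : (ι → R) × (κ → μ → R)) := by
    ext <;> simp [Prod.fst_sum, Prod.snd_sum, Finset.sum_apply, Pi.single_apply]
  simp only [hab, map_add, map_sum, map_smul]

end LinearMap

namespace Matrix

variable {α m n : Type*} [CommSemiring α] [Fintype m]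

theorem IsSymm.dotProduct_mulVec {A : Matrix m m α} (hA : A.IsSymm) (v w : m → α) :
    v ⬝ᵥ (A *ᵥ w) = (A *ᵥ v) ⬝ᵥ w := by
  rw [Matrix.dotProduct_mulVec, ← mulVec_transpose, hA.eq]

theorem IsSymm.transpose_mul_mul {D : Matrix m m α} (hD : D.IsSymm)
    (d : Matrix m n α) : (dᵀ * D * d).IsSymm := by
  simp only [IsSymm, transpose_mul, transpose_transpose, hD.eq, Matrix.mul_assoc]

theorem dotProduct_transpose_mul_single_mul_mulVec [Fintype n] [DecidableEq m]
    (d : Matrix m n α) (e : m) (v w : n → α) :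
    v ⬝ᵥ ((dᵀ * single e e (1 : α) * d) *ᵥ w) = (d *ᵥ v) e * (d *ᵥ w) e := by
  rw [← mulVec_mulVec, ← mulVec_mulVec, Matrix.dotProduct_mulVec, vecMul_transpose,
    single_mulVec, ← Pi.single, dotProduct_single, one_mul]

end Matrix

section Pencil

variable {𝕜 n : Type*} [NontriviallyNormedField 𝕜] [Fintype n] {A₀ A₁ B : Matrix n n 𝕜}
  {x : 𝕜 → n → 𝕜} {x' : n → 𝕜} {lam : 𝕜 → 𝕜} {lam' : 𝕜}

theorem mulVec_deriv_eq_of_eventually_eigen (hx : HasDerivAt x x' 0)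
    (hlam : HasDerivAt lam lam' 0)
    (heig : ∀ᶠ t in 𝓝 0, (A₀ + t • A₁) *ᵥ x t = lam t • (B *ᵥ x t)) :
    A₀ *ᵥ x' + A₁ *ᵥ x 0 = lam 0 • (B *ᵥ x') + lam' • (B *ᵥ x 0) := by
  have hpencil : HasDerivAt (fun t => (A₀ + t • A₁) *ᵥ x t) (A₀ *ᵥ x' + A₁ *ᵥ x 0) 0 := by
    have h := (hx.mulVec A₀).fun_add ((hasDerivAt_id (0 : 𝕜)).fun_smul (hx.mulVec A₁))
    simp only [id, zero_smul, one_smul, zero_add] at h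
    simpa only [add_mulVec, smul_mulVec] using h
  exact hpencil.unique ((hlam.smul (hx.mulVec B)).congr_of_eventuallyEq heig)

theorem mulVec_eq_smul_of_eventually_eigen
    (heig : ∀ᶠ t in 𝓝 0, (A₀ + t • A₁) *ᵥ x t = lam t • (B *ᵥ x t)) :
    A₀ *ᵥ x 0 = lam 0 • (B *ᵥ x 0) := by
  simpa only [zero_smul, add_zero] using heig.self_of_nhds

theorem dotProduct_mulVec_deriv_eq_of_eventually_eigen (hA₀ : A₀.IsSymm) (hB : B.IsSymm)
    (hx : HasDerivAt x x' 0) (hlam : HasDerivAt lam lam' 0)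
    (heig : ∀ᶠ t in 𝓝 0, (A₀ + t • A₁) *ᵥ x t = lam t • (B *ᵥ x t))
    {y : n → 𝕜} {μ : 𝕜} (hy : A₀ *ᵥ y = μ • (B *ᵥ y)) :
    (μ - lam 0) * (y ⬝ᵥ (B *ᵥ x')) + y ⬝ᵥ (A₁ *ᵥ x 0) = lam' * (y ⬝ᵥ (B *ᵥ x 0)) := by
  have h := congrArg (y ⬝ᵥ ·) (mulVec_deriv_eq_of_eventually_eigen hx hlam heig)
  simp only [dotProduct_add, dotProduct_smul, smul_eq_mul, hA₀.dotProduct_mulVec y x', hy,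
    smul_dotProduct, ← hB.dotProduct_mulVec] at h
  linear_combination h

theorem eigenvalue_deriv_eq_of_eventually_eigen (hA₀ : A₀.IsSymm) (hB : B.IsSymm)
    (hx : HasDerivAt x x' 0) (hlam : HasDerivAt lam lam' 0)
    (heig : ∀ᶠ t in 𝓝 0, (A₀ + t • A₁) *ᵥ x t = lam t • (B *ᵥ x t))
    (hnorm : x 0 ⬝ᵥ (B *ᵥ x 0) = 1) :
    lam' = x 0 ⬝ᵥ (A₁ *ᵥ x 0) := by
  have h := dotProduct_mulVec_deriv_eq_of_eventually_eigen hA₀ hB hx hlam heig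
    (mulVec_eq_smul_of_eventually_eigen heig)
  rw [sub_self, zero_mul, zero_add, hnorm, mul_one] at h
  exact h.symm

theorem dotProduct_mulVec_deriv_eq_of_ne (hA₀ : A₀.IsSymm) (hB : B.IsSymm)
    (hx : HasDerivAt x x' 0) (hlam : HasDerivAt lam lam' 0)
    (heig : ∀ᶠ t in 𝓝 0, (A₀ + t • A₁) *ᵥ x t = lam t • (B *ᵥ x t))
    {y : n → 𝕜} {μ : 𝕜} (hy : A₀ *ᵥ y = μ • (B *ᵥ y)) (horth : y ⬝ᵥ (B *ᵥ x 0) = 0)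
    (hμ : μ ≠ lam 0) :
    y ⬝ᵥ (B *ᵥ x') = (lam 0 - μ)⁻¹ * (y ⬝ᵥ (A₁ *ᵥ x 0)) := by
  have h := dotProduct_mulVec_deriv_eq_of_eventually_eigen hA₀ hB hx hlam heig hy
  rw [horth, mul_zero] at h
  have hμ' : lam 0 - μ ≠ 0 := sub_ne_zero.2 hμ.symm
  field_simp
  linear_combination -h

theorem dotProduct_mulVec_deriv_eq_zero_of_eventually_normalized [CharZero 𝕜] (hB : B.IsSymm)
    (hx : HasDerivAt x x' 0) (hnorm : ∀ᶠ t in 𝓝 0, x t ⬝ᵥ (B *ᵥ x t) = 1) :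
    x 0 ⬝ᵥ (B *ᵥ x') = 0 := by
  have h := ((hasDerivAt_const (0 : 𝕜) (1 : 𝕜)).congr_of_eventuallyEq hnorm).unique
    (hx.dotProduct (hx.mulVec B))
  rw [hB.dotProduct_mulVec x', dotProduct_comm] at h
  have : (2 : 𝕜) * (x 0 ⬝ᵥ (B *ᵥ x')) = 0 := by linear_combination -h
  simpa using this

end Pencil

section Family

variable {𝕜 n : Type*} [NontriviallyNormedField 𝕜] [CharZero 𝕜] [Fintype n] [DecidableEq n]
  {A₀ A₁ B : Matrix n n 𝕜}

theorem eigenvector_deriv_eq_sum (hA₀ : A₀.IsSymm) (hB : B.IsSymm)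
    {x : n → 𝕜 → n → 𝕜} {x' : n → n → 𝕜} {lam : n → 𝕜 → 𝕜} {lam' : n → 𝕜}
    (hx : ∀ i, HasDerivAt (x i) (x' i) 0) (hlam : ∀ i, HasDerivAt (lam i) (lam' i) 0)
    (heig : ∀ i, ∀ᶠ t in 𝓝 0, (A₀ + t • A₁) *ᵥ x i t = lam i t • (B *ᵥ x i t))
    (hnorm : ∀ i, ∀ᶠ t in 𝓝 0, x i t ⬝ᵥ (B *ᵥ x i t) = 1)
    (horth : ∀ i j, x i 0 ⬝ᵥ (B *ᵥ x j 0) = if i = j then 1 else 0)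
    (hdist : ∀ i j, i ≠ j → lam i 0 ≠ lam j 0) (i : n) :
    x' i = ∑ j, ((if j = i then 0 else (lam i 0 - lam j 0)⁻¹)
      * (x j 0 ⬝ᵥ (A₁ *ᵥ x i 0))) • x j 0 := by
  rw [eq_sum_dotProduct_mulVec_smul_of_orthonormal horth (x' i)]
  refine Finset.sum_congr rfl fun j _ => congrArg (· • x j 0) ?_
  split_ifs with hji
  · subst hji
    rw [zero_mul]
    exact dotProduct_mulVec_deriv_eq_zero_of_eventually_normalized hB (hx j) (hnorm j)
  · have hij := horth j i
    rw [if_neg hji] at hij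
    exact dotProduct_mulVec_deriv_eq_of_ne hA₀ hB (hx i) (hlam i) (heig i)
      (mulVec_eq_smul_of_eventually_eigen (heig j)) hij (hdist j i hji)

end Family

theorem stmt_15_general {E V : Type*} [Fintype E] [Fintype V] [DecidableEq E] [DecidableEq V]
    (d : Matrix E V ℝ) (s0 : V → ℝ) (s1 : E → ℝ) (e : E)
    (x : V → ℝ → V → ℝ) (lam : V → ℝ → ℝ)
    (x' : V → V → ℝ) (lam' : V → ℝ)
    (hx : ∀ i, HasDerivAt (x i) (x' i) 0)
    (hlam : ∀ i, HasDerivAt (lam i) (lam' i) 0)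
    (heig : ∀ i, ∀ᶠ t in 𝓝 (0 : ℝ),
      (dᵀ * (Matrix.diagonal s1 + t • Matrix.single e e 1) * d) *ᵥ x i t
        = lam i t • (Matrix.diagonal s0 *ᵥ x i t))
    (hnorm : ∀ i, ∀ᶠ t in 𝓝 (0 : ℝ), x i t ⬝ᵥ (Matrix.diagonal s0 *ᵥ x i t) = 1)
    (horth : ∀ i j, x i 0 ⬝ᵥ (Matrix.diagonal s0 *ᵥ x j 0) = if i = j then 1 else 0)
    (hdist : ∀ i j, i ≠ j → lam i 0 ≠ lam j 0)
    (L : (V → ℝ) × (V → V → ℝ) → ℝ)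
    (hL : DifferentiableAt ℝ L ((fun i => lam i 0), (fun i => x i 0))) :
    HasDerivAt (fun t => L ((fun i => lam i t), (fun i => x i t)))
      ((∑ i, (fderiv ℝ L ((fun i => lam i 0), (fun i => x i 0))
            (Pi.single i 1, 0)) * ((d *ᵥ x i 0) e) ^ 2)
        + ∑ i, ∑ v, ∑ j,
          (fderiv ℝ L ((fun i => lam i 0), (fun i => x i 0))
            (0, Pi.single i (Pi.single v 1)))
          * (if j = i then 0 else (lam i 0 - lam j 0)⁻¹)
          * x j 0 v * ((d *ᵥ x j 0) e) * ((d *ᵥ x i 0) e)) 0 := by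
  set D := fderiv ℝ L ((fun i => lam i 0), (fun i => x i 0))
  have hA₀ : (dᵀ * diagonal s1 * d).IsSymm := (isSymm_diagonal s1).transpose_mul_mul d
  have heig' : ∀ i, ∀ᶠ t in 𝓝 (0 : ℝ),
      (dᵀ * diagonal s1 * d + t • (dᵀ * single e e (1 : ℝ) * d)) *ᵥ x i t
        = lam i t • (diagonal s0 *ᵥ x i t) := fun i => by
    simpa only [Matrix.mul_add, Matrix.add_mul, Matrix.mul_smul, Matrix.smul_mul] using heig i
  have hlam' : ∀ i, lam' i = (d *ᵥ x i 0) e ^ 2 := fun i => by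
    rw [eigenvalue_deriv_eq_of_eventually_eigen hA₀ (isSymm_diagonal s0) (hx i) (hlam i)
      (heig' i) ((horth i i).trans (if_pos rfl)), dotProduct_transpose_mul_single_mul_mulVec, sq]
  have hx' : ∀ i v, x' i v = ∑ j, (if j = i then 0 else (lam i 0 - lam j 0)⁻¹)
      * ((d *ᵥ x j 0) e * (d *ᵥ x i 0) e) * x j 0 v := fun i v => by
    rw [eigenvector_deriv_eq_sum hA₀ (isSymm_diagonal s0) hx hlam heig' hnorm horth hdist i]
    simp only [Finset.sum_apply, Pi.smul_apply, smul_eq_mul,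
      dotProduct_transpose_mul_single_mul_mulVec]
  have hD : HasDerivAt (fun t => L ((fun i => lam i t), (fun i => x i t))) (D (lam', x')) 0 :=
    hL.hasFDerivAt.comp_hasDerivAt 0 ((hasDerivAt_pi.2 hlam).prodMk (hasDerivAt_pi.2 hx))
  convert hD using 1
  rw [← ContinuousLinearMap.coe_coe D, LinearMap.prod_pi_apply_eq_sum]
  simp only [ContinuousLinearMap.coe_coe, smul_eq_mul, hlam', hx', Finset.sum_mul]
  congr 1
  · exact Finset.sum_congr rfl fun i _ => mul_comm _ _
  · refine Finset.sum_congr rfl fun i _ => Finset.sum_congr rfl fun v _ =>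
      Finset.sum_congr rfl fun j _ => by ring

/-- Scalar case of the second backpropagation formula of Proposition 1: for a
differentiable loss `ℒ(λ¹,…,λⁿ, x¹,…,xⁿ)` and the perturbation `★₁(t) = ★₁ + t Eₑₑ` of the
pencil `(dᵀ★₁(t)d, ★₀)` with `★₀`-orthonormal eigenvectors and pairwise distinct eigenvalues,
`d/dt ℒ(λ(t), x(t))|₀ = Σᵢ (∂ℒ/∂λⁱ) (yⁱₑ)² + Σ_{i,v,j} (∂ℒ/∂xⁱᵥ) Mᵢⱼ xʲᵥ yʲₑ yⁱₑ`,
where `yⁱ = d xⁱ(0)`, `Mᵢⱼ = (λⁱ − λʲ)⁻¹` for `i ≠ j` and `Mᵢᵢ = 0`. The partial derivatives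
of `ℒ` are expressed via its Fréchet derivative applied to coordinate basis directions. -/
theorem stmt_15 {E V : Type*} [Fintype E] [Fintype V] [DecidableEq E] [DecidableEq V]
    (d : Matrix E V ℝ) (s0 : V → ℝ) (hs0 : ∀ v, 0 < s0 v) (s1 : E → ℝ) (e : E)
    (x : V → ℝ → V → ℝ) (lam : V → ℝ → ℝ)
    (x' : V → V → ℝ) (lam' : V → ℝ)
    (hx : ∀ i, HasDerivAt (x i) (x' i) 0)
    (hlam : ∀ i, HasDerivAt (lam i) (lam' i) 0)
    (heig : ∀ i, ∀ᶠ t in 𝓝 (0 : ℝ),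
      (dᵀ * (Matrix.diagonal s1 + t • Matrix.single e e 1) * d) *ᵥ x i t
        = lam i t • (Matrix.diagonal s0 *ᵥ x i t))
    (hnorm : ∀ i, ∀ᶠ t in 𝓝 (0 : ℝ), x i t ⬝ᵥ (Matrix.diagonal s0 *ᵥ x i t) = 1)
    (horth : ∀ i j, x i 0 ⬝ᵥ (Matrix.diagonal s0 *ᵥ x j 0) = if i = j then 1 else 0)
    (hdist : ∀ i j, i ≠ j → lam i 0 ≠ lam j 0)
    (L : (V → ℝ) × (V → V → ℝ) → ℝ)
    (hL : DifferentiableAt ℝ L ((fun i => lam i 0), (fun i => x i 0))) :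
    HasDerivAt (fun t => L ((fun i => lam i t), (fun i => x i t)))
      ((∑ i, (fderiv ℝ L ((fun i => lam i 0), (fun i => x i 0))
            (Pi.single i 1, 0)) * ((d *ᵥ x i 0) e) ^ 2)
        + ∑ i, ∑ v, ∑ j,
          (fderiv ℝ L ((fun i => lam i 0), (fun i => x i 0))
            (0, Pi.single i (Pi.single v 1)))
          * (if j = i then 0 else (lam i 0 - lam j 0)⁻¹)
          * x j 0 v * ((d *ᵥ x j 0) e) * ((d *ᵥ x i 0) e)) 0 :=
  stmt_15_general d s0 s1 e x lam x' lam' hx hlam heig hnorm horth hdist L hL
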